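/- Let m ∈ ℝ∖{0} and ν ∈ ℝ∖ℤ. On the slit plane ℂ∖(−∞,0] the massive formal powers satisfy the four identities: ∂_x Z¹_ν = ν·Z¹_{ν−1} + (m²/(ν+1))·Z¹_{ν+1}; ∂_x Zⁱ_ν = ν·Zⁱ_{ν−1} + (m²/(ν+1))·Zⁱ_{ν+1}; ∂_y Z¹_ν = ν·Zⁱ_{ν−1} − (m²/(ν+1))·Zⁱ_{ν+1}; ∂_y Zⁱ_ν = −ν·Z¹_{ν−1} + (m²/(ν+1))·Z¹_{ν+1}. -/

import Mathlib

open Complex Topology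

/-- The modified Bessel function of the first kind
`I_ν(x) = Σ_{k=0}^∞ (x/2)^{2k+ν}/(k!·Γ(k+ν+1))` (for `x > 0`). -/
noncomputable def besselI (ν x : ℝ) : ℝ :=
  ∑' k : ℕ, (x / 2) ^ (2 * (k : ℝ) + ν) / ((k.factorial : ℝ) * Real.Gamma ((k : ℝ) + ν + 1))

/-- `W_ν(z) = e^{iνθ}·I_ν(2|m|r)` for `z = r·e^{iθ}` on the slit plane. -/
noncomputable def Wfun (m ν : ℝ) (z : ℂ) : ℂ :=
  Complex.exp (Complex.I * (ν : ℂ) * (Complex.arg z : ℂ)) *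
    (besselI ν (2 * |m| * ‖z‖) : ℂ)

/-- The massive formal power `Z¹_ν = (Γ(ν+1)/|m|^ν)(W_ν + sgn(m)·conj W_{ν+1})`. -/
noncomputable def Z1 (m ν : ℝ) (z : ℂ) : ℂ :=
  ((Real.Gamma (ν + 1) / |m| ^ ν : ℝ) : ℂ) *
    (Wfun m ν z + (Real.sign m : ℂ) * (starRingEnd ℂ) (Wfun m (ν + 1) z))

/-- The massive formal power `Zⁱ_ν = i(Γ(ν+1)/|m|^ν)(W_ν − sgn(m)·conj W_{ν+1})`. -/
noncomputable def Zi (m ν : ℝ) (z : ℂ) : ℂ :=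
  Complex.I * ((Real.Gamma (ν + 1) / |m| ^ ν : ℝ) : ℂ) *
    (Wfun m ν z - (Real.sign m : ℂ) * (starRingEnd ℂ) (Wfun m (ν + 1) z))

noncomputable def gcoef (ν : ℝ) (k : ℕ) : ℝ :=
  1 / ((k.factorial : ℝ) * Real.Gamma ((k : ℝ) + ν + 1))

noncomputable def Gfun (ν : ℝ) (w : ℂ) : ℂ := ∑' k : ℕ, (gcoef ν k : ℂ) * w ^ k

def NonInt (ν : ℝ) : Prop := ∀ k : ℤ, ν ≠ (k : ℝ)

theorem Gamma_arg_ne {ν : ℝ} (hν : NonInt ν) (k : ℕ) : ((k : ℝ) + ν + 1) ≠ 0 := by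
  intro h
  exact hν (-(k : ℤ) - 1) (by push_cast; linarith)

theorem Gamma_ne {ν : ℝ} (hν : NonInt ν) (k : ℕ) : Real.Gamma ((k : ℝ) + ν + 1) ≠ 0 := by
  refine Real.Gamma_ne_zero fun n h => ?_
  exact hν (-(k:ℤ) - 1 - (n:ℤ)) (by push_cast; linarith)

theorem gcoef_ne {ν : ℝ} (hν : NonInt ν) (k : ℕ) : gcoef ν k ≠ 0 := by
  have h1 : (k.factorial : ℝ) ≠ 0 := Nat.cast_ne_zero.2 k.factorial_ne_zero
  simp only [gcoef, div_ne_zero_iff, one_ne_zero, mul_ne_zero_iff]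
  exact ⟨one_ne_zero, h1, Gamma_ne hν k⟩

theorem gcoef_rec {ν : ℝ} (hν : NonInt ν) (k : ℕ) :
    gcoef ν (k + 1) = gcoef ν k / (((k : ℝ) + 1) * ((k : ℝ) + ν + 1)) := by
  have h2 : Real.Gamma (((k:ℝ) + 1) + ν + 1) = ((k:ℝ) + ν + 1) * Real.Gamma ((k:ℝ) + ν + 1) := by
    rw [show ((k:ℝ) + 1) + ν + 1 = ((k:ℝ) + ν + 1) + 1 by ring,
      Real.Gamma_add_one (Gamma_arg_ne hν k)]
  have h3 : ((k+1).factorial : ℝ) = ((k:ℝ) + 1) * k.factorial := by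
    rw [Nat.factorial_succ]; push_cast; ring
  have h1 : (k.factorial : ℝ) ≠ 0 := Nat.cast_ne_zero.2 k.factorial_ne_zero
  have hΓ := Gamma_ne hν k
  have hk1 : ((k:ℝ) + 1) ≠ 0 := by positivity
  have hkν := Gamma_arg_ne hν k
  rw [gcoef, gcoef, Nat.cast_add, Nat.cast_one, h2, h3]
  field_simp

theorem gcoef_succ {ν : ℝ} (hν : NonInt ν) (k : ℕ) :
    ((k : ℝ) + 1) * gcoef ν (k + 1) = gcoef (ν + 1) k := by
  have h3 : ((k+1).factorial : ℝ) = ((k:ℝ) + 1) * k.factorial := by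
    rw [Nat.factorial_succ]; push_cast; ring
  have hk1 : ((k:ℝ) + 1) ≠ 0 := by positivity
  have h1 : (k.factorial : ℝ) ≠ 0 := Nat.cast_ne_zero.2 k.factorial_ne_zero
  have hΓ : Real.Gamma ((k:ℝ) + (ν+1) + 1) ≠ 0 := Gamma_ne (fun j h => hν (j-1) (by push_cast at h ⊢; linarith)) k
  rw [gcoef, gcoef, h3, show ((k+1 : ℕ):ℝ) + ν + 1 = (k:ℝ) + (ν+1) + 1 by push_cast; ring]
  field_simp

theorem gcoef_shift {ν : ℝ} (hν : NonInt ν) (k : ℕ) :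
    (ν + (k : ℝ)) * gcoef ν k = gcoef (ν - 1) k := by
  have h0 : (k:ℝ) + ν ≠ 0 := by
    intro h; exact hν (-(k:ℤ)) (by push_cast; linarith)
  have h2 : Real.Gamma ((k:ℝ) + ν + 1) = ((k:ℝ) + ν) * Real.Gamma ((k:ℝ) + ν) := by
    rw [Real.Gamma_add_one h0]
  have hΓ : Real.Gamma ((k:ℝ) + ν) ≠ 0 := by
    refine Real.Gamma_ne_zero fun n h => ?_
    exact hν (-(k:ℤ) - (n:ℤ)) (by push_cast; linarith)
  have h1 : (k.factorial : ℝ) ≠ 0 := Nat.cast_ne_zero.2 k.factorial_ne_zero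
  rw [gcoef, gcoef, h2, show (k:ℝ) + (ν - 1) + 1 = (k:ℝ) + ν by ring]
  field_simp
  ring

theorem summable_master {ν : ℝ} (hν : NonInt ν) (R : ℝ) (hR : 1 ≤ R) :
    Summable (fun k : ℕ => ((k : ℝ) + 1) * |gcoef ν k| * R ^ k) := by
  have hR0 : 0 < R := lt_of_lt_of_le one_pos hR
  refine summable_of_ratio_norm_eventually_le (r := 1/2) (by norm_num) ?_
  have hN : ∀ᶠ k : ℕ in Filter.atTop, (|ν| + 1 ≤ (k:ℝ)) ∧ (8 * R ≤ (k:ℝ)) := by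
    filter_upwards [Filter.eventually_ge_atTop ⌈|ν| + 1⌉₊, Filter.eventually_ge_atTop ⌈8*R⌉₊]
      with k h1 h2
    exact ⟨le_trans (Nat.le_ceil _) (Nat.cast_le.2 h1),
      le_trans (Nat.le_ceil _) (Nat.cast_le.2 h2)⟩
  filter_upwards [hN] with k hk
  obtain ⟨h1, h2⟩ := hk
  have hνk : (1:ℝ) ≤ (k:ℝ) + ν + 1 := by
    have := neg_abs_le ν; linarith
  have hpos : (0:ℝ) < ((k:ℝ)+1) * ((k:ℝ)+ν+1) := by positivity
  have e1 : |gcoef ν (k+1)| = |gcoef ν k| / (((k:ℝ)+1) * ((k:ℝ)+ν+1)) := by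
    rw [gcoef_rec hν k, abs_div, abs_of_pos hpos]
  have hf : ∀ j : ℕ, ‖((j:ℝ)+1) * |gcoef ν j| * R ^ j‖ = ((j:ℝ)+1) * |gcoef ν j| * R ^ j :=
    fun j => Real.norm_of_nonneg (by positivity)
  rw [hf, hf]
  push_cast
  rw [e1, div_eq_mul_inv, pow_succ]
  have key : ((k:ℝ)+1+1) * ((((k:ℝ)+1) * ((k:ℝ)+ν+1))⁻¹) * R ≤ 1/2 * (((k:ℝ)+1)) := by
    rw [show ((k:ℝ)+1+1) * ((((k:ℝ)+1) * ((k:ℝ)+ν+1))⁻¹) * R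
        = (((k:ℝ)+1+1) * R) / (((k:ℝ)+1) * ((k:ℝ)+ν+1)) by ring,
      div_le_iff₀ hpos]
    nlinarith [hνk, h2, hR0.le, hR, sq_nonneg ((k:ℝ)+1)]
  calc ((k:ℝ)+1+1) * (|gcoef ν k| * (((k:ℝ)+1) * ((k:ℝ)+ν+1))⁻¹) * (R^k * R)
      = (((k:ℝ)+1+1) * ((((k:ℝ)+1) * ((k:ℝ)+ν+1))⁻¹) * R) * (|gcoef ν k| * R^k) := by ring
    _ ≤ (1/2 * ((k:ℝ)+1)) * (|gcoef ν k| * R^k) :=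
        mul_le_mul_of_nonneg_right key (by positivity)
    _ = 1/2 * (((k:ℝ)+1) * |gcoef ν k| * R^k) := by ring

theorem term_norm_bound {ν : ℝ} (R : ℝ) (hR : 1 ≤ R) {y : ℂ} (hy : ‖y‖ ≤ R) (k : ℕ) :
    ‖(gcoef ν k : ℂ) * ((k : ℂ) * y ^ (k - 1))‖ ≤ ((k:ℝ) + 1) * |gcoef ν k| * R ^ k := by
  rw [norm_mul, norm_mul, Complex.norm_real, Real.norm_eq_abs, Complex.norm_natCast, norm_pow]
  have h1 : ‖y‖ ^ (k-1) ≤ R ^ k := by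
    calc ‖y‖ ^ (k-1) ≤ R ^ (k-1) := pow_le_pow_left₀ (norm_nonneg y) hy _
      _ ≤ R ^ k := pow_le_pow_right₀ hR (Nat.sub_le k 1)
  have h2 : (k : ℝ) ≤ (k:ℝ) + 1 := by linarith
  calc |gcoef ν k| * ((k:ℝ) * ‖y‖ ^ (k-1))
      ≤ |gcoef ν k| * (((k:ℝ)+1) * R ^ k) := by
        apply mul_le_mul_of_nonneg_left _ (abs_nonneg _)
        apply mul_le_mul h2 h1 (by positivity) (by positivity)
    _ = ((k:ℝ)+1) * |gcoef ν k| * R ^ k := by ring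

theorem summable_norm_term {ν : ℝ} (hν : NonInt ν) (w : ℂ) :
    Summable (fun k : ℕ => ‖(gcoef ν k : ℂ) * w ^ k‖) := by
  refine Summable.of_nonneg_of_le (fun k => norm_nonneg _) (fun k => ?_)
    (summable_master hν (‖w‖ + 1) (by linarith [norm_nonneg w]))
  rw [norm_mul, norm_pow, Complex.norm_real, Real.norm_eq_abs]
  have h1 : ‖w‖ ^ k ≤ (‖w‖ + 1) ^ k := pow_le_pow_left₀ (norm_nonneg w) (by linarith) k
  have h2 : (1:ℝ) ≤ (k:ℝ) + 1 := by linarith [Nat.cast_nonneg (α := ℝ) k]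
  calc |gcoef ν k| * ‖w‖ ^ k ≤ |gcoef ν k| * (‖w‖ + 1) ^ k :=
        mul_le_mul_of_nonneg_left h1 (abs_nonneg _)
    _ ≤ ((k:ℝ)+1) * (|gcoef ν k| * (‖w‖ + 1) ^ k) :=
        le_mul_of_one_le_left (by positivity) h2
    _ = ((k:ℝ)+1) * |gcoef ν k| * (‖w‖ + 1) ^ k := by ring

theorem summable_term {ν : ℝ} (hν : NonInt ν) (w : ℂ) :
    Summable (fun k : ℕ => (gcoef ν k : ℂ) * w ^ k) :=
  (summable_norm_term hν w).of_norm

theorem G_hasDerivAt {ν : ℝ} (hν : NonInt ν) (w : ℂ) :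
    HasDerivAt (Gfun ν) (Gfun (ν + 1) w) w := by
  set R : ℝ := ‖w‖ + 1 with hRdef
  have hR : 1 ≤ R := by rw [hRdef]; linarith [norm_nonneg w]
  have hball : w ∈ Metric.ball (0:ℂ) R := by
    simp [hRdef, Metric.mem_ball, dist_zero_right]
  have hD : HasDerivAt (fun z => ∑' k : ℕ, (gcoef ν k : ℂ) * z ^ k)
      (∑' k : ℕ, (gcoef ν k : ℂ) * ((k : ℂ) * w ^ (k - 1))) w := by
    refine hasDerivAt_tsum_of_isPreconnected
      (u := fun k : ℕ => ((k:ℝ) + 1) * |gcoef ν k| * R ^ k)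
      (summable_master hν R hR) Metric.isOpen_ball (convex_ball (0:ℂ) R).isPreconnected
      (fun k y _ => ((hasDerivAt_pow k y).const_mul ((gcoef ν k : ℂ))))
      (fun k y hy => ?_) hball (summable_term hν w) hball
    exact term_norm_bound R hR (by rw [Metric.mem_ball, dist_zero_right] at hy; exact hy.le) k
  have hsum : Summable (fun k : ℕ => (gcoef ν k : ℂ) * ((k : ℂ) * w ^ (k - 1))) := by
    refine Summable.of_norm (Summable.of_nonneg_of_le (fun k => norm_nonneg _)
      (fun k => term_norm_bound R hR (by simp [hRdef]) k) (summable_master hν R hR))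
  have heq : (∑' k : ℕ, (gcoef ν k : ℂ) * ((k : ℂ) * w ^ (k - 1))) = Gfun (ν + 1) w := by
    rw [Summable.tsum_eq_zero_add hsum]
    simp only [Nat.cast_zero, zero_mul, mul_zero, zero_add, Gfun]
    refine tsum_congr fun k => ?_
    have h := gcoef_succ hν k
    have hc : ((gcoef (ν+1) k : ℝ) : ℂ) = (((k:ℝ)+1 : ℝ) : ℂ) * ((gcoef ν (k+1) : ℝ) : ℂ) := by
      rw [← Complex.ofReal_mul, h]
    push_cast at hc ⊢
    rw [hc]
    ring
  rw [← heq]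
  exact hD

theorem G_rec {ν : ℝ} (hν : NonInt ν) (t : ℂ) :
    Gfun (ν - 1) t = (ν : ℂ) * Gfun ν t + t * Gfun (ν + 1) t := by
  have hν1 : NonInt (ν + 1) := fun j h => hν (j-1) (by push_cast at h ⊢; linarith)
  have hνm : NonInt (ν - 1) := fun j h => hν (j+1) (by push_cast at h ⊢; linarith)
  have hshift : ∀ k : ℕ, ((gcoef (ν-1) k : ℝ) : ℂ) = ((ν:ℂ) + k) * (gcoef ν k : ℂ) := by
    intro k
    rw [← gcoef_shift hν k]
    push_cast
    ring
  have h1 : Summable (fun k : ℕ => (ν:ℂ) * ((gcoef ν k : ℂ) * t ^ k)) :=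
    (summable_term hν t).mul_left _
  have hq : Summable (fun k : ℕ => ((ν:ℂ) + k) * (gcoef ν k : ℂ) * t ^ k) := by
    refine (summable_term hνm t).congr fun k => ?_
    rw [hshift k]
  have h2 : Summable (fun k : ℕ => (k:ℂ) * ((gcoef ν k : ℂ) * t ^ k)) := by
    refine (hq.sub h1).congr fun k => ?_
    ring
  have step1 : Gfun (ν - 1) t
      = (∑' k : ℕ, (ν:ℂ) * ((gcoef ν k : ℂ) * t ^ k))
        + ∑' k : ℕ, (k:ℂ) * ((gcoef ν k : ℂ) * t ^ k) := by
    rw [← Summable.tsum_add h1 h2, Gfun]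
    refine tsum_congr fun k => ?_
    rw [hshift k]
    ring
  have step2 : (∑' k : ℕ, (k:ℂ) * ((gcoef ν k : ℂ) * t ^ k)) = t * Gfun (ν + 1) t := by
    rw [Summable.tsum_eq_zero_add h2]
    simp only [Nat.cast_zero, zero_mul, zero_add]
    have : ∀ k : ℕ, ((k+1 : ℕ):ℂ) * ((gcoef ν (k+1) : ℂ) * t ^ (k+1))
        = t * ((gcoef (ν+1) k : ℂ) * t ^ k) := by
      intro k
      have h := gcoef_succ hν k
      have hc : ((gcoef (ν+1) k : ℝ) : ℂ) = (((k:ℝ)+1 : ℝ) : ℂ) * ((gcoef ν (k+1) : ℝ) : ℂ) := by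
        rw [← Complex.ofReal_mul, h]
      push_cast at hc ⊢
      rw [hc, pow_succ]
      ring
    rw [tsum_congr this, tsum_mul_left]
    rfl
  rw [step1, step2, tsum_mul_left]
  rfl

theorem cpow_eq_exp_mul {ν : ℝ} {z : ℂ} (hz : z ∈ Complex.slitPlane) :
    z ^ (ν:ℂ) = Complex.exp (Complex.I * ν * (Complex.arg z : ℂ)) * ((‖z‖ ^ ν : ℝ) : ℂ) := by
  have hz0 : z ≠ 0 := Complex.slitPlane_ne_zero hz
  have hr : 0 < ‖z‖ := norm_pos_iff.mpr hz0
  rw [Complex.cpow_def_of_ne_zero hz0, Complex.log]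
  rw [show ((Real.log ‖z‖ : ℂ) + (Complex.arg z : ℂ) * Complex.I) * (ν:ℂ)
      = ((Real.log ‖z‖ * ν : ℝ) : ℂ) + Complex.I * ν * (Complex.arg z : ℂ) by
    push_cast; ring]
  rw [Complex.exp_add, ← Complex.ofReal_exp, ← Real.rpow_def_of_pos hr]
  ring

theorem W_eq {m ν : ℝ} (hm : m ≠ 0) {z : ℂ} (hz : z ∈ Complex.slitPlane) :
    Wfun m ν z
    = ((|m| ^ ν : ℝ) : ℂ) * z ^ (ν:ℂ) * Gfun ν ((m:ℂ)^2 * (z * (starRingEnd ℂ) z)) := by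
  rw [Wfun]
  have hz0 : z ≠ 0 := Complex.slitPlane_ne_zero hz
  set r := ‖z‖ with hrdef
  have hr : 0 < r := norm_pos_iff.mpr hz0
  have hm' : 0 < |m| := abs_pos.2 hm
  have hx : 0 < |m| * r := by positivity
  have harg : (m:ℂ)^2 * (z * (starRingEnd ℂ) z) = ((m^2 * r^2 : ℝ) : ℂ) := by
    rw [Complex.mul_conj, Complex.normSq_eq_norm_sq]
    push_cast
    ring
  have hb : besselI ν (2 * |m| * r) = (|m| * r)^ν * ∑' k : ℕ, gcoef ν k * (m^2 * r^2)^k := by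
    rw [besselI, ← tsum_mul_left]
    refine tsum_congr fun k => ?_
    have e0 : 2 * |m| * r / 2 = |m| * r := by ring
    have e1 : (|m| * r) ^ (2 * (k:ℝ)+ν) = (|m| * r)^ν * ((|m| * r)^2)^k := by
      rw [Real.rpow_add hx, show (2 * (k:ℝ)) = ((2 * k : ℕ) : ℝ) by push_cast; ring,
        Real.rpow_natCast, pow_mul, mul_comm]
    have e2 : ((|m| * r)^2 : ℝ) = m^2 * r^2 := by
      rw [mul_pow, _root_.sq_abs m]
    rw [e0, e1, e2, gcoef]
    ring
  rw [hb, harg]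
  have hG : Gfun ν ((m^2 * r^2 : ℝ) : ℂ) = ((∑' k : ℕ, gcoef ν k * (m^2 * r^2)^k : ℝ) : ℂ) := by
    rw [Complex.ofReal_tsum]
    exact tsum_congr fun k => by push_cast; ring
  rw [hG, cpow_eq_exp_mul hz]
  have e3 : ((|m| * r)^ν : ℝ) = |m|^ν * r^ν := Real.mul_rpow (abs_nonneg m) hr.le
  push_cast [e3]
  ring

theorem nonint_shift {ν : ℝ} (hν : NonInt ν) (c : ℤ) : NonInt (ν + c) :=
  fun j h => hν (j - c) (by push_cast at h ⊢; linarith)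

theorem abs_rpow_succ (m ν : ℝ) (hm : m ≠ 0) : |m| ^ (ν + 1) = |m| ^ ν * |m| := by
  rw [Real.rpow_add (abs_pos.2 hm), Real.rpow_one]

theorem W_hasFDerivAt {m ν : ℝ} (hm : m ≠ 0) (hν : NonInt ν) {z : ℂ} (hz : z ∈ Complex.slitPlane) :
    HasFDerivAt (Wfun m ν)
      (((|m| : ℝ) : ℂ) • ((Wfun m (ν-1) z) • (1 : ℂ →L[ℝ] ℂ)
        + (Wfun m (ν+1) z) • (Complex.conjCLE.toContinuousLinearMap))) z := by
  have hz0 : z ≠ 0 := Complex.slitPlane_ne_zero hz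
  have hν1 : NonInt (ν + 1) := by simpa using nonint_shift hν 1
  have hνm : NonInt (ν - 1) := by
    have h := nonint_shift hν (-1); rwa [Int.cast_neg, Int.cast_one, ← sub_eq_add_neg] at h
  have htdef : ((m:ℂ)^2 * (z * (starRingEnd ℂ) z)) = ((m:ℂ)^2 * (z * (starRingEnd ℂ) z)) := rfl
  -- derivative of w ↦ w ^ ν
  have h1 : HasFDerivAt (fun w : ℂ => w ^ (ν:ℂ))
      ((ContinuousLinearMap.smulRight (1 : ℂ →L[ℂ] ℂ)
        ((ν:ℂ) * z ^ ((ν:ℂ) - 1))).restrictScalars ℝ) z :=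
    ((Complex.hasStrictDerivAt_cpow_const hz).hasDerivAt.hasFDerivAt).restrictScalars ℝ
  -- derivative of conj
  have hconj : HasFDerivAt (fun w : ℂ => (starRingEnd ℂ) w)
      (Complex.conjCLE.toContinuousLinearMap) z :=
    Complex.conjCLE.toContinuousLinearMap.hasFDerivAt
  -- derivative of inner function
  have hinner : HasFDerivAt (fun w : ℂ => (m:ℂ)^2 * (w * (starRingEnd ℂ) w))
      (((m:ℂ)^2) • (z • Complex.conjCLE.toContinuousLinearMap
        + ((starRingEnd ℂ) z) • (1 : ℂ →L[ℝ] ℂ))) z := by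
    exact ((hasFDerivAt_id z).mul hconj).const_mul ((m:ℂ)^2)
  -- derivative of G ∘ inner
  have hG := ((G_hasDerivAt hν ((m:ℂ)^2 * (z * (starRingEnd ℂ) z))).hasFDerivAt.restrictScalars ℝ).comp z hinner
  -- product
  have hF : HasFDerivAt (fun w : ℂ => ((|m| ^ ν : ℝ) : ℂ) * (w ^ (ν:ℂ) *
      Gfun ν ((m:ℂ)^2 * (w * (starRingEnd ℂ) w))))
      ((((|m| ^ ν : ℝ) : ℂ)) • ((z ^ (ν:ℂ)) •
          (((ContinuousLinearMap.smulRight (1 : ℂ →L[ℂ] ℂ)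
              (Gfun (ν+1) ((m:ℂ)^2 * (z * (starRingEnd ℂ) z)))).restrictScalars ℝ).comp
            (((m:ℂ)^2) • (z • Complex.conjCLE.toContinuousLinearMap
              + ((starRingEnd ℂ) z) • (1 : ℂ →L[ℝ] ℂ))))
        + (Gfun ν ((m:ℂ)^2 * (z * (starRingEnd ℂ) z))) • ((ContinuousLinearMap.smulRight (1 : ℂ →L[ℂ] ℂ)
            ((ν:ℂ) * z ^ ((ν:ℂ) - 1))).restrictScalars ℝ))) z := by
    exact (h1.mul hG).const_mul _
  -- transfer to Wfun
  have hWF : HasFDerivAt (Wfun m ν) _ z := hF.congr_of_eventuallyEq <|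
    Filter.eventuallyEq_of_mem (Complex.isOpen_slitPlane.mem_nhds hz)
      (fun w hw => by rw [W_eq hm hw, mul_assoc])
  refine hWF.congr_fderiv ?_
  ext w
  simp only [ContinuousLinearMap.add_apply, ContinuousLinearMap.smul_apply,
    ContinuousLinearMap.coe_comp', Function.comp_apply,
    ContinuousLinearMap.coe_restrictScalars', ContinuousLinearMap.smulRight_apply,
    ContinuousLinearMap.one_apply, ContinuousLinearEquiv.coe_coe, Complex.conjCLE_apply,
    ContinuousLinearMap.coe_coe, smul_eq_mul]
  have hcast1 : ((ν - 1 : ℝ) : ℂ) = (ν:ℂ) - 1 := by push_cast; ring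
  have hcast2 : ((ν + 1 : ℝ) : ℂ) = (ν:ℂ) + 1 := by push_cast; ring
  have eA : z ^ (ν:ℂ) = z ^ ((ν:ℂ) - 1) * z := by
    have h := Complex.cpow_add ((ν:ℂ) - 1) 1 hz0
    rw [Complex.cpow_one, show ((ν:ℂ) - 1) + 1 = (ν:ℂ) by ring] at h
    exact h
  have eB : z ^ ((ν:ℂ) + 1) = z ^ ((ν:ℂ) - 1) * z * z := by
    rw [Complex.cpow_add _ _ hz0, Complex.cpow_one, ← eA]
  have eC : ((|m| ^ (ν - 1) : ℝ) : ℂ) * ((|m| : ℝ) : ℂ) = ((|m| ^ ν : ℝ) : ℂ) := by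
    rw [← Complex.ofReal_mul]
    congr 1
    rw [← abs_rpow_succ m (ν - 1) hm, show ν - 1 + 1 = ν by ring]
  have eD : ((|m| ^ (ν + 1) : ℝ) : ℂ) = ((|m| ^ ν : ℝ) : ℂ) * ((|m| : ℝ) : ℂ) := by
    rw [← Complex.ofReal_mul, abs_rpow_succ m ν hm]
  have eE : ((m : ℝ) : ℂ)^2 = ((|m| : ℝ) : ℂ)^2 := by
    rw [← Complex.ofReal_pow, ← Complex.ofReal_pow, _root_.sq_abs]
  rw [W_eq hm hz (ν := ν - 1), W_eq hm hz (ν := ν + 1), G_rec hν, hcast1, hcast2, eA, eB]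
  rw [eD, ← eC, eE]
  ring

/-- The four differentiation identities of the massive formal powers on the slit plane:
`∂_x Z¹_ν = ν Z¹_{ν−1} + (m²/(ν+1)) Z¹_{ν+1}`, `∂_x Zⁱ_ν = ν Zⁱ_{ν−1} + (m²/(ν+1)) Zⁱ_{ν+1}`,
`∂_y Z¹_ν = ν Zⁱ_{ν−1} − (m²/(ν+1)) Zⁱ_{ν+1}`, `∂_y Zⁱ_ν = −ν Z¹_{ν−1} + (m²/(ν+1)) Z¹_{ν+1}`,
where `∂_x f z = fderiv ℝ f z 1` and `∂_y f z = fderiv ℝ f z i`. -/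
theorem stmt4 (m ν : ℝ) (hm : m ≠ 0) (hν : ∀ k : ℤ, ν ≠ (k : ℝ)) :
    ∀ z ∈ Complex.slitPlane,
      fderiv ℝ (Z1 m ν) z 1 =
        (ν : ℂ) * Z1 m (ν - 1) z + ((m ^ 2 / (ν + 1) : ℝ) : ℂ) * Z1 m (ν + 1) z ∧
      fderiv ℝ (Zi m ν) z 1 =
        (ν : ℂ) * Zi m (ν - 1) z + ((m ^ 2 / (ν + 1) : ℝ) : ℂ) * Zi m (ν + 1) z ∧
      fderiv ℝ (Z1 m ν) z Complex.I =
        (ν : ℂ) * Zi m (ν - 1) z - ((m ^ 2 / (ν + 1) : ℝ) : ℂ) * Zi m (ν + 1) z ∧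
      fderiv ℝ (Zi m ν) z Complex.I =
        -(ν : ℂ) * Z1 m (ν - 1) z + ((m ^ 2 / (ν + 1) : ℝ) : ℂ) * Z1 m (ν + 1) z := by
  intro z hz
  have hν' : NonInt ν := hν
  have hν1 : NonInt (ν + 1) := by simpa using nonint_shift hν' 1
  have hW := W_hasFDerivAt hm hν' hz
  have hW1 := W_hasFDerivAt hm hν1 hz
  have hconjW : HasFDerivAt (fun y => (starRingEnd ℂ) (Wfun m (ν+1) y))
      (Complex.conjCLE.toContinuousLinearMap.comp
        (((|m| : ℝ) : ℂ) • ((Wfun m (ν+1-1) z) • (1 : ℂ →L[ℝ] ℂ)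
          + (Wfun m (ν+1+1) z) • (Complex.conjCLE.toContinuousLinearMap)))) z :=
    Complex.conjCLE.toContinuousLinearMap.hasFDerivAt.comp z hW1
  have hZ1 : HasFDerivAt (Z1 m ν)
      (((Real.Gamma (ν + 1) / |m| ^ ν : ℝ) : ℂ) •
        ((((|m| : ℝ) : ℂ) • ((Wfun m (ν-1) z) • (1 : ℂ →L[ℝ] ℂ)
            + (Wfun m (ν+1) z) • (Complex.conjCLE.toContinuousLinearMap)))
          + ((Real.sign m : ℂ)) • (Complex.conjCLE.toContinuousLinearMap.comp
            (((|m| : ℝ) : ℂ) • ((Wfun m (ν+1-1) z) • (1 : ℂ →L[ℝ] ℂ)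
              + (Wfun m (ν+1+1) z) • (Complex.conjCLE.toContinuousLinearMap)))))) z :=
    (hW.add (hconjW.const_mul _)).const_mul _
  have hZi : HasFDerivAt (Zi m ν)
      ((Complex.I * ((Real.Gamma (ν + 1) / |m| ^ ν : ℝ) : ℂ)) •
        ((((|m| : ℝ) : ℂ) • ((Wfun m (ν-1) z) • (1 : ℂ →L[ℝ] ℂ)
            + (Wfun m (ν+1) z) • (Complex.conjCLE.toContinuousLinearMap)))
          - ((Real.sign m : ℂ)) • (Complex.conjCLE.toContinuousLinearMap.comp
            (((|m| : ℝ) : ℂ) • ((Wfun m (ν+1-1) z) • (1 : ℂ →L[ℝ] ℂ)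
              + (Wfun m (ν+1+1) z) • (Complex.conjCLE.toContinuousLinearMap)))))) z :=
    (hW.sub (hconjW.const_mul _)).const_mul _
  rw [hZ1.fderiv, hZi.fderiv]
  -- coefficient identities
  have hν0 : ν ≠ 0 := fun h => hν 0 (by exact_mod_cast h)
  have hνp1 : ν + 1 ≠ 0 := fun h => hν (-1) (by push_cast; linarith)
  have K1r : ν * (Real.Gamma ν / |m| ^ (ν-1)) = |m| * (Real.Gamma (ν+1) / |m| ^ ν) := by
    have hg : Real.Gamma (ν + 1) = ν * Real.Gamma ν := Real.Gamma_add_one hν0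
    have hp : |m| ^ ν = |m| ^ (ν-1) * |m| := by
      rw [← abs_rpow_succ m (ν-1) hm, show ν - 1 + 1 = ν by ring]
    have hne : |m| ^ (ν-1) ≠ 0 := (Real.rpow_pos_of_pos (abs_pos.2 hm) _).ne'
    have hne2 : |m| ≠ 0 := abs_ne_zero.2 hm
    rw [hg, hp]
    field_simp
  have K2r : (m^2/(ν+1)) * (Real.Gamma (ν+1+1) / |m| ^ (ν+1)) = |m| * (Real.Gamma (ν+1) / |m| ^ ν) := by
    have hg : Real.Gamma (ν + 1 + 1) = (ν+1) * Real.Gamma (ν+1) := Real.Gamma_add_one hνp1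
    have hp : |m| ^ (ν+1) = |m| ^ ν * |m| := abs_rpow_succ m ν hm
    have hne : |m| ^ ν ≠ 0 := (Real.rpow_pos_of_pos (abs_pos.2 hm) _).ne'
    have hne2 : |m| ≠ 0 := abs_ne_zero.2 hm
    have hsq : m^2 = |m| * |m| := by rw [← _root_.sq_abs m]; ring
    rw [hg, hp, hsq]
    field_simp
  have K1 : (ν:ℂ) * ((Real.Gamma ν / |m| ^ (ν-1) : ℝ) : ℂ)
      = ((|m| : ℝ):ℂ) * ((Real.Gamma (ν+1) / |m| ^ ν : ℝ) : ℂ) := by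
    rw [← Complex.ofReal_mul, ← Complex.ofReal_mul, K1r]
  have K2 : ((m^2/(ν+1) : ℝ):ℂ) * ((Real.Gamma (ν+1+1) / |m| ^ (ν+1) : ℝ) : ℂ)
      = ((|m| : ℝ):ℂ) * ((Real.Gamma (ν+1) / |m| ^ ν : ℝ) : ℂ) := by
    rw [← Complex.ofReal_mul, ← Complex.ofReal_mul, K2r]
  simp only [ContinuousLinearMap.add_apply, ContinuousLinearMap.smul_apply,
    ContinuousLinearMap.sub_apply, ContinuousLinearMap.coe_comp', Function.comp_apply,
    ContinuousLinearMap.one_apply, ContinuousLinearEquiv.coe_coe, Complex.conjCLE_apply,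
    ContinuousLinearMap.coe_coe, smul_eq_mul, map_add, map_mul, map_one, Complex.conj_conj,
    Complex.conj_I, Complex.conj_ofReal, mul_one, Z1, Zi, show ν - 1 + 1 = ν by ring,
    show ν + 1 - 1 = ν by ring]
  refine ⟨?_, ?_, ?_, ?_⟩
  · linear_combination (-K1) * (Wfun m (ν-1) z + (Real.sign m : ℂ) * (starRingEnd ℂ) (Wfun m ν z))
      - K2 * (Wfun m (ν+1) z + (Real.sign m : ℂ) * (starRingEnd ℂ) (Wfun m (ν+1+1) z))
  · linear_combination (-(Complex.I * K1)) * (Wfun m (ν-1) z - (Real.sign m : ℂ) * (starRingEnd ℂ) (Wfun m ν z))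
      - (Complex.I * K2) * (Wfun m (ν+1) z - (Real.sign m : ℂ) * (starRingEnd ℂ) (Wfun m (ν+1+1) z))
  · linear_combination (norm := (ring_nf; simp only [Complex.I_sq, map_neg, Complex.conj_I, neg_neg]; try ring_nf; try simp only [Complex.I_sq, map_neg, Complex.conj_I, neg_neg]; try ring1))
      (-(Complex.I * K1)) * (Wfun m (ν-1) z - (Real.sign m : ℂ) * (starRingEnd ℂ) (Wfun m ν z))
      + (Complex.I * K2) * (Wfun m (ν+1) z - (Real.sign m : ℂ) * (starRingEnd ℂ) (Wfun m (ν+1+1) z))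
  · linear_combination (norm := (ring_nf; simp only [Complex.I_sq, map_neg, Complex.conj_I, neg_neg]; try ring_nf; try simp only [Complex.I_sq, map_neg, Complex.conj_I, neg_neg]; try ring1))
      K1 * (Wfun m (ν-1) z + (Real.sign m : ℂ) * (starRingEnd ℂ) (Wfun m ν z))
      - K2 * (Wfun m (ν+1) z + (Real.sign m : ℂ) * (starRingEnd ℂ) (Wfun m (ν+1+1) z))
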